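/- Let K be a number field and f ∈ K[X] a polynomial of degree d ≥ 2. Then the set {α ∈ K : f^(k)(α) = 0 for some integer k ≥ 1} is finite. -/

import Mathlib

/-!
At every absolute value `v` of `K` there is a radius beyond which `f` strictly increases `v`,
so the forward orbit of a point beyond it never reaches `0`. With `a_i` the coefficients of `f`,
for nonarchimedean `v` the radius `∏_{i<d} max(v a_i, 1) · max(v a_d⁻¹, 1)` works, and it equals
`1` at almost all places; for archimedean `v`, `d + 1` times it works. So every `α` with
`f^[k] α = 0` has multiplicative height bounded in terms of `f` alone, and Northcott's theorem
leaves only finitely many such `α`.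
-/

open Polynomial Finset Height AdmissibleAbsValues

theorem AbsoluteValue.le_of_iterate_eq_zero {K : Type*} [Field K] (v : AbsoluteValue K ℝ)
    {g : K → K} {R : ℝ} (hR : 0 ≤ R) (hg : ∀ x, R < v x → v x < v (g x)) {x : K} {k : ℕ}
    (h : g^[k] x = 0) : v x ≤ R := by
  by_contra! hx
  have hmaps : Set.MapsTo g {y | R < v y} {y | R < v y} := fun y hy ↦ hy.trans (hg y hy)
  have := hmaps.iterate k hx
  simp [h] at this
  linarith

namespace Polynomial

variable {K : Type*} [Field K] (f : K[X]) (v : AbsoluteValue K ℝ)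

noncomputable def escapeRadius : ℝ :=
  (∏ i ∈ range f.natDegree, max (v (f.coeff i)) 1) * max (v f.leadingCoeff⁻¹) 1

theorem one_le_escapeRadius : 1 ≤ f.escapeRadius v :=
  one_le_mul_of_one_le_of_one_le (one_le_prod fun _ _ ↦ le_max_right ..) (le_max_right ..)

variable {f}

theorem prod_max_abv_coeff_le_abv_leadingCoeff_mul_escapeRadius (hf : f ≠ 0) :
    ∏ i ∈ range f.natDegree, max (v (f.coeff i)) 1 ≤ v f.leadingCoeff * f.escapeRadius v := by
  have hlc : 1 ≤ v f.leadingCoeff * max (v f.leadingCoeff⁻¹) 1 := by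
    rw [map_inv₀, mul_max_of_nonneg _ _ (v.nonneg _),
      mul_inv_cancel₀ (v.ne_zero (leadingCoeff_ne_zero.mpr hf))]
    exact le_max_left ..
  rw [escapeRadius, mul_left_comm]
  exact le_mul_of_one_le_right (prod_nonneg fun _ _ ↦ by positivity) hlc

theorem one_le_abv_leadingCoeff_mul_escapeRadius (hf : f ≠ 0) :
    1 ≤ v f.leadingCoeff * f.escapeRadius v :=
  (one_le_prod fun _ _ ↦ le_max_right ..).trans
    (prod_max_abv_coeff_le_abv_leadingCoeff_mul_escapeRadius v hf)

theorem abv_coeff_mul_pow_le (hf : f ≠ 0) {x : K} (hx : 1 ≤ v x) {i : ℕ} (hi : i < f.natDegree) :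
    v (f.coeff i * x ^ i) ≤ v f.leadingCoeff * f.escapeRadius v * v x ^ (f.natDegree - 1) := by
  rw [map_mul, map_pow]
  have hcoeff : v (f.coeff i) ≤ v f.leadingCoeff * f.escapeRadius v :=
    (le_prod_max_one (mem_range.mpr hi) _).trans
      (prod_max_abv_coeff_le_abv_leadingCoeff_mul_escapeRadius v hf)
  exact mul_le_mul hcoeff (pow_le_pow_right₀ hx (by omega)) (by positivity)
    ((v.nonneg _).trans hcoeff)

theorem eval_eq_sum_range_add_leadingCoeff_mul (x : K) :
    f.eval x = ∑ i ∈ range f.natDegree, f.coeff i * x ^ i + f.leadingCoeff * x ^ f.natDegree := by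
  rw [eval_eq_sum_range, sum_range_succ, leadingCoeff]

theorem abv_lt_abv_eval (hd : 2 ≤ f.natDegree) {x : K}
    (hx : (f.natDegree + 1) * f.escapeRadius v < v x) : v x < v (f.eval x) := by
  have hf : f ≠ 0 := ne_zero_of_natDegree_gt hd
  have hR := f.one_le_escapeRadius v
  have hLR := one_le_abv_leadingCoeff_mul_escapeRadius v hf
  set d := f.natDegree
  set L := v f.leadingCoeff
  set R := f.escapeRadius v
  set t := v x
  have ht : 1 ≤ t := by nlinarith
  have hL : 0 < L := v.pos (leadingCoeff_ne_zero.mpr hf)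
  have hlow : v (∑ i ∈ range d, f.coeff i * x ^ i) ≤ d * (L * R * t ^ (d - 1)) := by
    refine (v.sum_le _ _).trans ?_
    have := sum_le_card_nsmul (range d) (fun i ↦ v (f.coeff i * x ^ i)) _
      fun i hi ↦ abv_coeff_mul_pow_le v hf ht (mem_range.mp hi)
    simpa using this
  have hlead : v (f.leadingCoeff * x ^ d) = L * t * t ^ (d - 1) := by
    rw [map_mul, map_pow, mul_assoc, ← pow_succ', Nat.sub_one_add_one (by omega)]
  have hgrow : 1 < L * (t - d * R) := by nlinarith
  calc t ≤ t ^ (d - 1) := le_self_pow₀ ht (by omega)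
    _ < L * (t - d * R) * t ^ (d - 1) := lt_mul_of_one_lt_left (by positivity) hgrow
    _ = v (f.leadingCoeff * x ^ d) - d * (L * R * t ^ (d - 1)) := by rw [hlead]; ring
    _ ≤ v (f.eval x) := by
      rw [eval_eq_sum_range_add_leadingCoeff_mul, add_comm]
      have := v.le_add (f.leadingCoeff * x ^ d) (∑ i ∈ range d, f.coeff i * x ^ i)
      linarith

theorem abv_lt_abv_eval_of_isNonarchimedean (hv : IsNonarchimedean v) (hd : 2 ≤ f.natDegree)
    {x : K} (hx : f.escapeRadius v < v x) : v x < v (f.eval x) := by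
  have hf : f ≠ 0 := ne_zero_of_natDegree_gt hd
  have hR := f.one_le_escapeRadius v
  have hLR := one_le_abv_leadingCoeff_mul_escapeRadius v hf
  set d := f.natDegree
  set L := v f.leadingCoeff
  set R := f.escapeRadius v
  set t := v x
  have ht : 1 ≤ t := by linarith
  have hL : 0 < L := v.pos (leadingCoeff_ne_zero.mpr hf)
  have hlow : v (∑ i ∈ range d, f.coeff i * x ^ i) ≤ L * R * t ^ (d - 1) :=
    (hv.apply_sum_le_sup (nonempty_range_iff.mpr (by omega))).trans <|
      sup'_le _ _ fun i hi ↦ abv_coeff_mul_pow_le v hf ht (mem_range.mp hi)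
  have hlead : v (f.leadingCoeff * x ^ d) = L * t * t ^ (d - 1) := by
    rw [map_mul, map_pow, mul_assoc, ← pow_succ', Nat.sub_one_add_one (by omega)]
  have hdom : v (∑ i ∈ range d, f.coeff i * x ^ i) < v (f.leadingCoeff * x ^ d) := by
    rw [hlead]
    exact hlow.trans_lt (by gcongr)
  calc t ≤ t ^ (d - 1) := le_self_pow₀ ht (by omega)
    _ < L * t * t ^ (d - 1) := lt_mul_of_one_lt_left (by positivity) (by nlinarith)
    _ = v (f.eval x) := by
      rw [eval_eq_sum_range_add_leadingCoeff_mul, hv.add_eq_right_of_lt hdom, hlead]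

theorem abv_le_of_iterate_eval_eq_zero (hd : 2 ≤ f.natDegree) {x : K} {k : ℕ}
    (h : f.eval^[k] x = 0) : v x ≤ (f.natDegree + 1) * f.escapeRadius v :=
  v.le_of_iterate_eq_zero (by positivity [f.one_le_escapeRadius v])
    (fun _ ↦ abv_lt_abv_eval v hd) h

theorem abv_le_of_iterate_eval_eq_zero_of_isNonarchimedean (hv : IsNonarchimedean v)
    (hd : 2 ≤ f.natDegree) {x : K} {k : ℕ} (h : f.eval^[k] x = 0) : v x ≤ f.escapeRadius v :=
  v.le_of_iterate_eq_zero (zero_le_one.trans (f.one_le_escapeRadius v))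
    (fun _ ↦ abv_lt_abv_eval_of_isNonarchimedean v hv hd) h

end Polynomial

namespace Height

variable {K : Type*} [Field K] [AdmissibleAbsValues K]

theorem mulHeight₁_le_of_abv_le {x : K} {Rarch Rnonarch : AbsoluteValue K ℝ → ℝ}
    (harch : ∀ v ∈ archAbsVal, max (v x) 1 ≤ Rarch v)
    (hnonarch : ∀ v ∈ nonarchAbsVal, max (v x) 1 ≤ Rnonarch v)
    (hfin : (fun v : nonarchAbsVal ↦ Rnonarch v.val).HasFiniteMulSupport) :
    mulHeight₁ x ≤ (archAbsVal.map Rarch).prod * ∏ᶠ v : nonarchAbsVal, Rnonarch v.val := by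
  rw [mulHeight₁_eq]
  refine mul_le_mul_of_nonneg
    (Multiset.prod_map_le_prod_map₀ _ _ (fun _ _ ↦ by positivity) harch)
    (finprod_le_finprod (by fun_prop) (fun _ ↦ by positivity) hfin fun v ↦ hnonarch v v.prop)
    (Multiset.prod_map_nonneg fun _ _ ↦ by positivity)
    (finprod_nonneg fun v ↦ (by positivity : (0 : ℝ) ≤ max _ 1).trans (hnonarch v v.prop))

end Height

namespace Polynomial

variable {K : Type*} [Field K] [AdmissibleAbsValues K] {f : K[X]}

theorem mulHeight₁_le_of_iterate_eval_eq_zero (hd : 2 ≤ f.natDegree) {x : K} {k : ℕ}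
    (h : f.eval^[k] x = 0) :
    mulHeight₁ x ≤ (archAbsVal.map fun v ↦ (f.natDegree + 1) * f.escapeRadius v).prod *
      ∏ᶠ v : nonarchAbsVal, f.escapeRadius v.val := by
  refine mulHeight₁_le_of_abv_le (fun v _ ↦ ?_) (fun v hv ↦ ?_) (by unfold escapeRadius; fun_prop)
  · exact max_le (abv_le_of_iterate_eval_eq_zero v hd h) (by nlinarith [f.one_le_escapeRadius v])
  · exact max_le (abv_le_of_iterate_eval_eq_zero_of_isNonarchimedean v
      (isNonarchimedean v hv) hd h) (f.one_le_escapeRadius v)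

theorem finite_setOf_iterate_eval_eq_zero [Northcott (mulHeight₁ (K := K))]
    (hd : 2 ≤ f.natDegree) : {x : K | ∃ k, f.eval^[k] x = 0}.Finite :=
  (Northcott.finite_le (h := mulHeight₁) _).subset fun _ ⟨_, h⟩ ↦
    mulHeight₁_le_of_iterate_eval_eq_zero hd h

end Polynomial

theorem stmt_18 (K : Type*) [Field K] [NumberField K] (f : Polynomial K)
    (hdeg : 2 ≤ f.natDegree) :
    {α : K | ∃ k : ℕ, 1 ≤ k ∧ f.eval^[k] α = 0}.Finite :=
  (finite_setOf_iterate_eval_eq_zero hdeg).subset fun _ ⟨k, _, h⟩ ↦ ⟨k, h⟩
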